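/- Let V be a finite-dimensional real vector space, D ⊆ V ⊕ V* maximally isotropic, S ⊆ V ⊕ V* isotropic, and D^S := (D ∩ S⊥) + S. If D' ⊆ V ⊕ V* is any maximally isotropic subspace with S ⊆ D', then D' ∩ D ⊆ D^S ∩ D; moreover D' ∩ D = D^S ∩ D if and only if D' = D^S. -/

import Mathlib

/-- The orthogonal complement of a subspace `E ⊆ V ⊕ V*` with respect to the canonical
symmetric pairing `⟨(X,ξ),(Y,ζ)⟩ = ζ(X) + ξ(Y)`. -/
def perp {V : Type*} [AddCommGroup V] [Module ℝ V]
    (E : Submodule ℝ (V × Module.Dual ℝ V)) :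
    Submodule ℝ (V × Module.Dual ℝ V) where
  carrier := {p | ∀ q ∈ E, q.2 p.1 + p.2 q.1 = 0}
  add_mem' := by
    intro a b ha hb q hq
    have h1 := ha q hq
    have h2 := hb q hq
    simp only [Prod.fst_add, Prod.snd_add, map_add, LinearMap.add_apply]
    linarith
  zero_mem' := by
    intro q hq
    simp
  smul_mem' := by
    intro c a ha q hq
    have h := ha q hq
    simp only [Prod.smul_fst, Prod.smul_snd, map_smul, LinearMap.smul_apply, smul_eq_mul]
    rw [← mul_add, h, mul_zero]

/-!
Since `D'` is maximally isotropic and contains `S`, it lies in `S⊥`, so `D' ∩ D ⊆ D ∩ S⊥ ⊆ D^S`.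
The subspace `D^S` is itself maximally isotropic: its orthogonal is `(D + S) ∩ S⊥`, which by the
modular law equals `(D ∩ S⊥) + S` because `S ⊆ S⊥`. If `D' ∩ D = D^S ∩ D`, then `D ∩ S⊥ ⊆ D'`,
hence `D^S ⊆ D'`, and an inclusion between maximally isotropic subspaces is an equality.
-/

section Perp

variable {V : Type*} [AddCommGroup V] [Module ℝ V]

noncomputable def canonicalPairing (V : Type*) [AddCommGroup V] [Module ℝ V] :
    LinearMap.BilinForm ℝ (V × Module.Dual ℝ V) :=
  LinearMap.BilinForm.congr (LinearEquiv.prodComm ℝ (Module.Dual ℝ V) V) (LinearMap.dualProd ℝ V)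

theorem canonicalPairing_isRefl : (canonicalPairing V).IsRefl := fun p q h => by
  simpa [canonicalPairing, add_comm] using h

theorem canonicalPairing_nondegenerate : (canonicalPairing V).Nondegenerate := by
  have hsep : (LinearMap.dualProd ℝ V).SeparatingLeft :=
    (LinearMap.separatingLeft_dualProd ℝ V).2 (Module.eval_apply_injective ℝ)
  exact LinearMap.BilinForm.Nondegenerate.congr _
    ((LinearMap.isSymm_dualProd ℝ V).isRefl.nondegenerate_iff_separatingLeft.2 hsep)

theorem perp_eq_orthogonal (E : Submodule ℝ (V × Module.Dual ℝ V)) :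
    perp E = (canonicalPairing V).orthogonal E := by
  ext p
  simp [perp, canonicalPairing, LinearMap.BilinForm.mem_orthogonal_iff, add_comm]

theorem perp_antitone : Antitone (perp (V := V)) :=
  fun _ _ hAB _ hp q hq => hp q (hAB hq)

theorem perp_sup (A B : Submodule ℝ (V × Module.Dual ℝ V)) :
    perp (A ⊔ B) = perp A ⊓ perp B := by
  refine le_antisymm (le_inf (perp_antitone le_sup_left) (perp_antitone le_sup_right)) ?_
  rintro p ⟨hpA, hpB⟩ q hq
  obtain ⟨a, ha, b, hb, rfl⟩ := Submodule.mem_sup.1 hq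
  have h₁ := hpA a ha
  have h₂ := hpB b hb
  simp only [Prod.fst_add, Prod.snd_add, map_add, LinearMap.add_apply]
  linarith

theorem le_perp_of_le {S D : Submodule ℝ (V × Module.Dual ℝ V)} (hD : perp D = D)
    (hSD : S ≤ D) : D ≤ perp S :=
  hD ▸ perp_antitone hSD

theorem eq_of_le_of_perp_eq {E F : Submodule ℝ (V × Module.Dual ℝ V)} (hE : perp E = E)
    (hF : perp F = F) (hEF : E ≤ F) : E = F :=
  le_antisymm hEF <|
    calc F = perp F := hF.symm
      _ ≤ perp E := perp_antitone hEF
      _ = E := hE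

variable [FiniteDimensional ℝ V]

theorem perp_perp (A : Submodule ℝ (V × Module.Dual ℝ V)) : perp (perp A) = A := by
  rw [perp_eq_orthogonal, perp_eq_orthogonal]
  exact LinearMap.BilinForm.orthogonal_orthogonal canonicalPairing_nondegenerate
    canonicalPairing_isRefl A

theorem perp_inf (A B : Submodule ℝ (V × Module.Dual ℝ V)) :
    perp (A ⊓ B) = perp A ⊔ perp B := by
  conv_lhs => rw [← perp_perp A, ← perp_perp B, ← perp_sup, perp_perp]

theorem perp_inf_perp_sup_eq_self {D S : Submodule ℝ (V × Module.Dual ℝ V)} (hD : perp D = D)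
    (hS : S ≤ perp S) : perp ((D ⊓ perp S) ⊔ S) = (D ⊓ perp S) ⊔ S :=
  calc perp ((D ⊓ perp S) ⊔ S)
      = (D ⊔ S) ⊓ perp S := by rw [perp_sup, perp_inf, hD, perp_perp]
    _ = (D ⊓ perp S) ⊔ S := by
      rw [sup_comm, sup_inf_assoc_of_le D hS, sup_comm]

end Perp

/-- Let `V` be a finite-dimensional real vector space, `D ⊆ V ⊕ V*`
maximally isotropic, `S ⊆ V ⊕ V*` isotropic, and `D^S := (D ∩ S⊥) + S`. If `D'` is any
maximally isotropic subspace with `S ⊆ D'`, then `D' ∩ D ⊆ D^S ∩ D`; moreover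
`D' ∩ D = D^S ∩ D` if and only if `D' = D^S`. -/
theorem stmt_7 {V : Type*} [AddCommGroup V] [Module ℝ V] [FiniteDimensional ℝ V]
    (D S D' : Submodule ℝ (V × Module.Dual ℝ V))
    (hD : perp D = D) (hS : S ≤ perp S)
    (hD' : perp D' = D') (hSD' : S ≤ D') :
    D' ⊓ D ≤ ((D ⊓ perp S) ⊔ S) ⊓ D ∧
    (D' ⊓ D = ((D ⊓ perp S) ⊔ S) ⊓ D ↔ D' = (D ⊓ perp S) ⊔ S) := by
  have hD'S : D' ≤ perp S := le_perp_of_le hD' hSD'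
  have hD'D : D' ⊓ D ≤ D ⊓ perp S := le_inf inf_le_right (inf_le_left.trans hD'S)
  refine ⟨le_inf (hD'D.trans le_sup_left) inf_le_right, fun h => ?_, by rintro rfl; rfl⟩
  have hDS : D ⊓ perp S ≤ D' :=
    calc D ⊓ perp S ≤ ((D ⊓ perp S) ⊔ S) ⊓ D := le_inf le_sup_left inf_le_left
      _ = D' ⊓ D := h.symm
      _ ≤ D' := inf_le_left
  exact (eq_of_le_of_perp_eq (perp_inf_perp_sup_eq_self hD hS) hD' (sup_le hDS hSD')).symm
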